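/- arXiv:2506.05832 — 5 statements merged into one kernel-verified Lean document; each statement's English description precedes it below -/
import Mathlib

section
/- A property of executions is a safety property if and only if it is a closed set in the sequence ultrametric: for a type A and a set P ⊆ (ℕ → A), the following are equivalent: (i) for every s ∉ P there exists n : ℕ such that every sequence t : ℕ → A with t i = s i for all i ≤ n satisfies t ∉ P; (ii) P is closed with respect to d, i.e., every sequence s such that for all ε > 0 there exists t ∈ P with d s t < ε already belongs to P. -/
open scoped Classical in
/-- The ultrametric on infinite sequences: `d a b = 0` if `a = b`, and `d a b = 2^(-k)`
where `k` is the least index with `a k ≠ b k` otherwise. -/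
noncomputable def seqDist {A : Type*} (a b : ℕ → A) : ℝ :=
  if h : a = b then 0
  else (2 : ℝ) ^ (-(Nat.find (Function.ne_iff.mp h) : ℤ))

/-! The ball of radius `2^(-n)` around `s` consists of the sequences sharing the prefix
`s 0, …, s n`, and these radii tend to `0`; so "every ball around `s` meets `P`" says exactly
that every prefix of `s` extends to an element of `P`, which is the negation of the
safety condition at `s`. -/

theorem seqDist_lt_two_zpow_iff {A : Type*} {s t : ℕ → A} (n : ℕ) :
    seqDist s t < (2 : ℝ) ^ (-(n : ℤ)) ↔ ∀ i ≤ n, t i = s i := by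
  classical
  unfold seqDist
  split_ifs with heq
  · simp [heq]
  · rw [zpow_lt_zpow_iff_right₀ one_lt_two, neg_lt_neg_iff, Nat.cast_lt, Nat.lt_find_iff]
    simp only [ne_eq, not_not, eq_comm]

theorem forall_exists_seqDist_lt_iff {A : Type*} (P : Set (ℕ → A)) (s : ℕ → A) :
    (∀ ε > (0 : ℝ), ∃ t ∈ P, seqDist s t < ε) ↔ ∀ n : ℕ, ∃ t ∈ P, ∀ i ≤ n, t i = s i := by
  simp_rw [← seqDist_lt_two_zpow_iff]
  refine ⟨fun h n ↦ h _ (zpow_pos two_pos _), fun h ε hε ↦ ?_⟩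
  obtain ⟨n, hn⟩ := exists_pow_lt_of_lt_one hε one_half_lt_one
  obtain ⟨t, htP, hst⟩ := h n
  refine ⟨t, htP, hst.trans ?_⟩
  rwa [zpow_neg, zpow_natCast, ← inv_pow, ← one_div]

/-- A property of executions is a safety property iff it is a closed set in the
sequence ultrametric: (i) every execution outside `P` has a finite prefix none of
whose extensions belong to `P`, iff (ii) `P` contains all its limit points. -/
theorem safety_iff_closed {A : Type*} (P : Set (ℕ → A)) :
    (∀ s ∉ P, ∃ n : ℕ, ∀ t : ℕ → A, (∀ i ≤ n, t i = s i) → t ∉ P) ↔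
    (∀ s : ℕ → A, (∀ ε > (0 : ℝ), ∃ t ∈ P, seqDist s t < ε) → s ∈ P) := by
  refine forall_congr' fun s ↦ ?_
  rw [forall_exists_seqDist_lt_iff, ← not_imp_not]
  push Not
  simp only [and_comm]
end

section
/- A well-founded initial UTxO set is disjoint from the outputs created by any transaction with nonempty inputs: let h : Tx → B be injective, let u₀ ⊆ OutputRef × O be well-founded, and let t : Tx satisfy inputs t ≠ ∅. Then u₀ ∩ mkOuts t = ∅. -/
/-- Output references spent by a transaction: keys of its inputs. -/
def getORefs {B O Tx : Type*} (inputs : Tx → Set ((B × ℕ) × O)) (t : Tx) :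
    Set (B × ℕ) :=
  {r | ∃ o, (r, o) ∈ inputs t}

/-- UTxO entries created by a transaction: the `i`-th output of `t` keyed by `(h t, i)`. -/
def mkOuts {B O Tx : Type*} (outputs : Tx → List O) (hsh : Tx → B) (t : Tx) :
    Set ((B × ℕ) × O) :=
  {p | ∃ i o, (outputs t)[i]? = some o ∧ p = ((hsh t, i), o)}

/-- A UTxO set is well-founded if the hash part of each of its keys comes from a
transaction with empty inputs. -/
def WellFoundedUTxO {B O Tx : Type*} (inputs : Tx → Set ((B × ℕ) × O)) (hsh : Tx → B)
    (u₀ : Set ((B × ℕ) × O)) : Prop :=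
  ∀ b n o, ((b, n), o) ∈ u₀ → ∃ t₀ : Tx, hsh t₀ = b ∧ inputs t₀ = ∅

/-- The valid-trace conditions at step `k`: nonempty inputs, inputs present in the
current state, and the UTxO update rule. -/
def ValidStep {B O Tx : Type*} (inputs : Tx → Set ((B × ℕ) × O))
    (outputs : Tx → List O) (hsh : Tx → B)
    (u : ℕ → Set ((B × ℕ) × O)) (t : ℕ → Tx) (k : ℕ) : Prop :=
  inputs (t k) ≠ ∅ ∧ inputs (t k) ⊆ u k ∧
    u (k + 1) = {p | p ∈ u k ∧ p.1 ∉ getORefs inputs (t k)} ∪ mkOuts outputs hsh (t k)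

/-- A valid ledger trace: the valid-trace conditions hold at every step. -/
def ValidLedgerTrace {B O Tx : Type*} (inputs : Tx → Set ((B × ℕ) × O))
    (outputs : Tx → List O) (hsh : Tx → B)
    (u : ℕ → Set ((B × ℕ) × O)) (t : ℕ → Tx) : Prop :=
  ∀ k, ValidStep inputs outputs hsh u t k

theorem fst_fst_eq_of_mem_mkOuts {B O Tx : Type*} {outputs : Tx → List O} {hsh : Tx → B}
    {t : Tx} {p : (B × ℕ) × O} (hp : p ∈ mkOuts outputs hsh t) : p.1.1 = hsh t := by
  obtain ⟨i, o, -, rfl⟩ := hp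
  rfl

/-- A well-founded initial UTxO set is disjoint from the outputs created by any
transaction with nonempty inputs. -/
theorem wellFounded_disjoint_mkOuts {B O Tx : Type*}
    (inputs : Tx → Set ((B × ℕ) × O)) (outputs : Tx → List O) (hsh : Tx → B)
    (hinj : Function.Injective hsh)
    (u₀ : Set ((B × ℕ) × O)) (hwf : WellFoundedUTxO inputs hsh u₀)
    (t : Tx) (ht : inputs t ≠ ∅) :
    u₀ ∩ mkOuts outputs hsh t = ∅ := by
  refine Set.eq_empty_iff_forall_notMem.2 fun ⟨⟨b, n⟩, o⟩ ⟨hmem, hout⟩ => ?_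
  obtain ⟨t₀, hhash, hinputs⟩ := hwf b n o hmem
  have ht₀ : t₀ = t := hinj (hhash.trans (fst_fst_eq_of_mem_mkOuts hout))
  exact ht (ht₀ ▸ hinputs)
end

section
/- Trivial update protection: let h : Tx → B be injective, and let (u, t) be a valid ledger trace (u : ℕ → Set (OutputRef × O), t : ℕ → Tx) whose initial state u 0 is well-founded. Then for all indices i < j, u i ≠ u j. -/
/-!
The invariant is that no entry of `u k` is keyed by the hash of a transaction `t r` with
`k ≤ r`: it holds for `u 0` because such a `t r` would have empty inputs, and it is preserved
because the outputs of `t k` cannot carry the hash of a later `t r`, as `t k ≠ t r`. The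
invariant forces each input of `t k`, once spent, to stay absent from all later states, which
separates `u k` from every later state and `t k` from every later transaction.
-/

section UTxOTrace

variable {B O Tx : Type*} {inputs : Tx → Set ((B × ℕ) × O)} {outputs : Tx → List O}
  {hsh : Tx → B} {u : ℕ → Set ((B × ℕ) × O)} {t : ℕ → Tx}

def NoFutureKeys (hsh : Tx → B) (u : ℕ → Set ((B × ℕ) × O)) (t : ℕ → Tx) (k : ℕ) : Prop :=
  ∀ p ∈ u k, ∀ r, k ≤ r → p.1.1 ≠ hsh (t r)

theorem ValidStep.mem_of_mem_succ {k : ℕ} (hk : ValidStep inputs outputs hsh u t k)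
    {p : (B × ℕ) × O} (hp : p ∈ u (k + 1)) (hkey : p.1.1 ≠ hsh (t k)) :
    p ∈ u k ∧ p.1 ∉ getORefs inputs (t k) := by
  rw [hk.2.2] at hp
  rcases hp with hp | ⟨i, o, -, rfl⟩
  · exact hp
  · exact absurd rfl hkey

theorem ValidLedgerTrace.notMem_of_le (htrace : ValidLedgerTrace inputs outputs hsh u t)
    {p : (B × ℕ) × O} {a : ℕ} (ha : p ∉ u a) (hkey : ∀ r, a ≤ r → p.1.1 ≠ hsh (t r))
    {b : ℕ} (hab : a ≤ b) : p ∉ u b := by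
  induction b, hab using Nat.le_induction with
  | base => exact ha
  | succ b hab ih => exact fun hp => ih ((htrace b).mem_of_mem_succ hp (hkey b hab)).1

theorem ValidLedgerTrace.exists_input_notMem (htrace : ValidLedgerTrace inputs outputs hsh u t)
    {k : ℕ} (hk : NoFutureKeys hsh u t k) :
    ∃ p ∈ inputs (t k), ∀ q, k < q → p ∉ u q := by
  obtain ⟨p, hp⟩ := Set.nonempty_iff_ne_empty.mpr (htrace k).1
  have hkey : ∀ r, k ≤ r → p.1.1 ≠ hsh (t r) := hk p ((htrace k).2.1 hp)
  have hspent : p ∉ u (k + 1) := fun hp' =>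
    ((htrace k).mem_of_mem_succ hp' (hkey k le_rfl)).2 ⟨p.2, hp⟩
  exact ⟨p, hp, fun q hq => htrace.notMem_of_le hspent
    (fun r hr => hkey r (Nat.le_of_succ_le hr)) hq⟩

theorem ValidLedgerTrace.ne_of_noFutureKeys (htrace : ValidLedgerTrace inputs outputs hsh u t)
    {k q : ℕ} (hk : NoFutureKeys hsh u t k) (hkq : k < q) : t k ≠ t q := by
  obtain ⟨p, hp, hgone⟩ := htrace.exists_input_notMem hk
  intro heq
  exact hgone q hkq ((htrace q).2.1 (heq ▸ hp))

theorem ValidLedgerTrace.noFutureKeys (hinj : Function.Injective hsh)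
    (htrace : ValidLedgerTrace inputs outputs hsh u t)
    (hwf : WellFoundedUTxO inputs hsh (u 0)) (k : ℕ) : NoFutureKeys hsh u t k := by
  induction k with
  | zero =>
    intro p hp r _ hr
    obtain ⟨t₀, ht₀, hempty⟩ := hwf p.1.1 p.1.2 p.2 hp
    exact (htrace r).1 (hinj (ht₀.trans hr) ▸ hempty)
  | succ k ih =>
    intro p hp r hr
    by_cases hkey : p.1.1 = hsh (t k)
    · rw [hkey]
      exact fun h => htrace.ne_of_noFutureKeys ih hr (hinj h)
    · exact ih p ((htrace k).mem_of_mem_succ hp hkey).1 r (Nat.le_of_succ_le hr)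

end UTxOTrace

/-- Trivial update protection: along a valid ledger trace starting from a
well-founded initial state, no UTxO state can occur twice. -/
theorem trivial_update_protection {B O Tx : Type*}
    (inputs : Tx → Set ((B × ℕ) × O)) (outputs : Tx → List O) (hsh : Tx → B)
    (hinj : Function.Injective hsh)
    (u : ℕ → Set ((B × ℕ) × O)) (t : ℕ → Tx)
    (htrace : ValidLedgerTrace inputs outputs hsh u t)
    (hwf : WellFoundedUTxO inputs hsh (u 0)) :
    ∀ i j : ℕ, i < j → u i ≠ u j := by
  intro i j hij heq
  obtain ⟨p, hp, hgone⟩ := htrace.exists_input_notMem (htrace.noFutureKeys hinj hwf i)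
  exact hgone j hij (heq ▸ (htrace i).2.1 hp)
end

section
/- Created output sets along a valid trace are pairwise disjoint and disjoint from the initial state: let h : Tx → B be injective, and let (u, t) be a valid ledger trace whose initial state u 0 is well-founded. Then: (i) u 0 ∩ mkOuts (t l) = ∅ for every l; (ii) mkOuts (t l) ∩ mkOuts (t m) = ∅ for all l ≠ m; and (iii) mkOuts (t k) ∩ u k = ∅ for every k, so that u (k+1) is the disjoint union of { (r, o) ∈ u k | r ∉ getORefs (t k) } and mkOuts (t k). -/
/-!
Along a valid trace, no entry of `u k` is keyed by the hash of a transaction `t i` with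
`i ≥ k`. For `k = 0` this is well-foundedness: a hash of `u 0` belongs to an input-free
transaction, while every `t i` spends something. The invariant also forces `t k ≠ t i`
for `k < i`: an input `(r, o)` of `t k` is removed at step `k`, and since `r` carries the
hash of no `t j` with `j ≥ k`, no later step can re-create it, so `t i` cannot spend it.
Hence the hashes `hsh (t k)` are pairwise distinct, which both propagates the invariant
to `u (k + 1)` and makes the created output sets pairwise disjoint.
-/

section LedgerTrace

variable {B O Tx : Type*} {inputs : Tx → Set ((B × ℕ) × O)} {outputs : Tx → List O}
  {hsh : Tx → B} {u : ℕ → Set ((B × ℕ) × O)} {t : ℕ → Tx}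

theorem hash_eq_of_mem_mkOuts {τ : Tx} {p : (B × ℕ) × O} (hp : p ∈ mkOuts outputs hsh τ) :
    p.1.1 = hsh τ := by
  obtain ⟨i, o, -, rfl⟩ := hp
  rfl

theorem disjoint_mkOuts_of_hash_ne {τ τ' : Tx} (h : hsh τ ≠ hsh τ') :
    Disjoint (mkOuts outputs hsh τ) (mkOuts outputs hsh τ') :=
  Set.disjoint_left.mpr fun _ hp hp' =>
    h ((hash_eq_of_mem_mkOuts hp).symm.trans (hash_eq_of_mem_mkOuts hp'))

theorem ValidStep.mem_succ {k : ℕ} (hk : ValidStep inputs outputs hsh u t k)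
    {p : (B × ℕ) × O} (hp : p ∈ u (k + 1)) :
    (p ∈ u k ∧ p.1 ∉ getORefs inputs (t k)) ∨ p ∈ mkOuts outputs hsh (t k) := by
  rwa [hk.2.2] at hp

namespace ValidLedgerTrace

theorem key_notMem_of_hash_ne (htrace : ValidLedgerTrace inputs outputs hsh u t)
    {r : B × ℕ} {a : ℕ} (hr : ∀ j ≥ a, r.1 ≠ hsh (t j)) (ha : ∀ o, (r, o) ∉ u a) :
    ∀ b ≥ a, ∀ o, (r, o) ∉ u b := by
  intro b hab
  induction b, hab using Nat.le_induction with
  | base => exact ha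
  | succ b hab ih =>
    intro o ho
    rcases (htrace b).mem_succ ho with ⟨ho, -⟩ | ho
    · exact ih o ho
    · exact hr b hab (hash_eq_of_mem_mkOuts ho)

theorem ne_of_lt_of_hash_ne (htrace : ValidLedgerTrace inputs outputs hsh u t) {k i : ℕ}
    (hfresh : ∀ p ∈ u k, ∀ j ≥ k, p.1.1 ≠ hsh (t j)) (hki : k < i) : t k ≠ t i := by
  intro heq
  obtain ⟨⟨r, o⟩, hro⟩ := Set.nonempty_iff_ne_empty.mpr (htrace k).1
  have hr : ∀ j ≥ k, r.1 ≠ hsh (t j) := hfresh (r, o) ((htrace k).2.1 hro)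
  have hspent : ∀ o', (r, o') ∉ u (k + 1) := by
    intro o' ho'
    rcases (htrace k).mem_succ ho' with ⟨-, hno⟩ | ho'
    · exact hno ⟨o, hro⟩
    · exact hr k le_rfl (hash_eq_of_mem_mkOuts ho')
  exact htrace.key_notMem_of_hash_ne (fun j hj => hr j (by omega)) hspent i hki o
    ((htrace i).2.1 (heq ▸ hro))

theorem hash_ne_of_mem (htrace : ValidLedgerTrace inputs outputs hsh u t)
    (hinj : Function.Injective hsh) (hwf : WellFoundedUTxO inputs hsh (u 0)) :
    ∀ k, ∀ p ∈ u k, ∀ i ≥ k, p.1.1 ≠ hsh (t i) := by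
  intro k
  induction k with
  | zero =>
    rintro ⟨⟨b, n⟩, o⟩ hp i - hbi
    obtain ⟨t₀, rfl, hempty⟩ := hwf b n o hp
    exact (htrace i).1 (hinj hbi ▸ hempty)
  | succ k ih =>
    intro p hp i hki
    rcases (htrace k).mem_succ hp with ⟨hp, -⟩ | hp
    · exact ih p hp i (by omega)
    · rw [hash_eq_of_mem_mkOuts hp]
      exact hinj.ne (htrace.ne_of_lt_of_hash_ne ih (by omega))

theorem injective (htrace : ValidLedgerTrace inputs outputs hsh u t)
    (hinj : Function.Injective hsh) (hwf : WellFoundedUTxO inputs hsh (u 0)) :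
    Function.Injective t := by
  intro l m heq
  by_contra hlm
  rcases Nat.lt_or_gt_of_ne hlm with h | h
  · exact htrace.ne_of_lt_of_hash_ne (htrace.hash_ne_of_mem hinj hwf l) h heq
  · exact htrace.ne_of_lt_of_hash_ne (htrace.hash_ne_of_mem hinj hwf m) h heq.symm

theorem disjoint_mkOuts_of_le (htrace : ValidLedgerTrace inputs outputs hsh u t)
    (hinj : Function.Injective hsh) (hwf : WellFoundedUTxO inputs hsh (u 0)) {k i : ℕ}
    (hki : k ≤ i) : Disjoint (u k) (mkOuts outputs hsh (t i)) :=
  Set.disjoint_left.mpr fun p hp hp' =>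
    htrace.hash_ne_of_mem hinj hwf k p hp i hki (hash_eq_of_mem_mkOuts hp')

end ValidLedgerTrace

end LedgerTrace

/-- Created output sets along a valid trace are pairwise disjoint and disjoint from
the initial state; consequently, each update is a disjoint union. -/
theorem created_outputs_disjoint {B O Tx : Type*}
    (inputs : Tx → Set ((B × ℕ) × O)) (outputs : Tx → List O) (hsh : Tx → B)
    (hinj : Function.Injective hsh)
    (u : ℕ → Set ((B × ℕ) × O)) (t : ℕ → Tx)
    (htrace : ValidLedgerTrace inputs outputs hsh u t)
    (hwf : WellFoundedUTxO inputs hsh (u 0)) :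
    (∀ l : ℕ, u 0 ∩ mkOuts outputs hsh (t l) = ∅) ∧
    (∀ l m : ℕ, l ≠ m → mkOuts outputs hsh (t l) ∩ mkOuts outputs hsh (t m) = ∅) ∧
    (∀ k : ℕ, mkOuts outputs hsh (t k) ∩ u k = ∅) ∧
    (∀ k : ℕ,
      u (k + 1) =
        {p | p ∈ u k ∧ p.1 ∉ getORefs inputs (t k)} ∪ mkOuts outputs hsh (t k) ∧
      {p | p ∈ u k ∧ p.1 ∉ getORefs inputs (t k)} ∩ mkOuts outputs hsh (t k) = ∅) := by
  have hstate {k i : ℕ} (hki : k ≤ i) : Disjoint (u k) (mkOuts outputs hsh (t i)) :=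
    htrace.disjoint_mkOuts_of_le hinj hwf hki
  simp only [← Set.disjoint_iff_inter_eq_empty]
  refine ⟨fun l => hstate l.zero_le, fun l m hlm => ?_, fun k => (hstate le_rfl).symm,
    fun k => ⟨(htrace k).2.2, (hstate le_rfl).mono_left fun _ hp => hp.1⟩⟩
  exact disjoint_mkOuts_of_hash_ne ((hinj.comp (htrace.injective hinj hwf)).ne hlm)
end

section
/- Final-state formula for a valid finite trace: let h : Tx → B be injective, let (u, t) be a valid ledger trace whose initial state u 0 is well-founded, and let n : ℕ. Then u (n+1) = { (r, o) ∈ u 0 ∪ ⋃_{i ≤ n} mkOuts (t i) | r ∉ ⋃_{i ≤ n} getORefs (t i) }; that is, the state after applying t 0, …, t n equals the initial state together with all created outputs, minus all entries whose keys were spent by some transaction in the sequence. -/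
/-
Unfolding the update rule, `u (n+1)` consists of the entries of `u 0` or of some
`mkOuts (t k)` that no later transaction spends, and this matches the formula provided no
transaction's outputs were already spent by itself or by an earlier transaction.  Such a key
`(h (t n), i)` would lie in some state `u j` with `j ≤ n`.  It cannot come from `u 0`, whose
hashes belong to input-free transactions, while `t n` has inputs.  It cannot come from an earlier
`t m` either: injectivity of `h` would give `t m = t n`, but the inputs of `t m` are spent at step
`m`, so `t n` could not find them in `u n`.  Strong induction on `n` ties the two halves together.
-/

theorem eq_of_update_of_fresh {α κ : Type*} (key : α → κ) (u : ℕ → Set α)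
    (S : ℕ → Set κ) (M : ℕ → Set α)
    (hstep : ∀ k, u (k + 1) = {p | p ∈ u k ∧ key p ∉ S k} ∪ M k) (n : ℕ)
    (hfresh : ∀ k < n, ∀ p ∈ M k, ∀ j ≤ k, key p ∉ S j) :
    u n = {p | (p ∈ u 0 ∪ ⋃ i < n, M i) ∧ key p ∉ ⋃ i < n, S i} := by
  induction n with
  | zero => ext; simp
  | succ n ih =>
    rw [hstep, ih fun k hk => hfresh k (by omega)]
    ext p
    simp only [Set.biUnion_lt_succ, Set.mem_union, Set.mem_ofPred_eq]
    by_cases hp : p ∈ M n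
    · have hunspent := hfresh n n.lt_add_one p hp
      have hunspent_before : key p ∉ ⋃ i < n, S i := by
        simpa only [Set.mem_iUnion₂, not_exists] using fun i hi => hunspent i hi.le
      simp [hp, hunspent_before, hunspent n le_rfl]
    · simp only [hp, or_false]
      tauto

theorem WellFoundedUTxO.fst_fst_ne {B O Tx : Type*} {inputs : Tx → Set ((B × ℕ) × O)}
    {hsh : Tx → B} {u₀ : Set ((B × ℕ) × O)} (hwf : WellFoundedUTxO inputs hsh u₀)
    (hinj : Function.Injective hsh) {tx : Tx} (htx : inputs tx ≠ ∅) {p : (B × ℕ) × O}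
    (hp : p ∈ u₀) : p.1.1 ≠ hsh tx := by
  obtain ⟨t₀, ht₀, hinputs⟩ := hwf _ _ _ hp
  intro h
  exact htx (hinj (ht₀.trans h) ▸ hinputs)

def cumulativeState {B O Tx : Type*} (inputs : Tx → Set ((B × ℕ) × O))
    (outputs : Tx → List O) (hsh : Tx → B) (u₀ : Set ((B × ℕ) × O)) (t : ℕ → Tx) (n : ℕ) :
    Set ((B × ℕ) × O) :=
  {p | (p ∈ u₀ ∪ ⋃ i < n, mkOuts outputs hsh (t i)) ∧ p.1 ∉ ⋃ i < n, getORefs inputs (t i)}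

namespace ValidLedgerTrace

variable {B O Tx : Type*} {inputs : Tx → Set ((B × ℕ) × O)} {outputs : Tx → List O}
  {hsh : Tx → B} {u : ℕ → Set ((B × ℕ) × O)} {t : ℕ → Tx}

theorem eq_cumulativeState_of_fresh (htrace : ValidLedgerTrace inputs outputs hsh u t)
    (n : ℕ) (hfresh : ∀ k < n, ∀ p ∈ mkOuts outputs hsh (t k), ∀ j ≤ k,
      p.1 ∉ getORefs inputs (t j)) :
    u n = cumulativeState inputs outputs hsh (u 0) t n :=
  eq_of_update_of_fresh Prod.fst u _ _ (fun k => (htrace k).2.2) n hfresh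

theorem ne_of_lt (htrace : ValidLedgerTrace inputs outputs hsh u t) {m n : ℕ}
    (hn : u n = cumulativeState inputs outputs hsh (u 0) t n) (hmn : m < n) : t m ≠ t n := by
  intro heq
  obtain ⟨q, hq⟩ := Set.nonempty_iff_ne_empty.2 (htrace n).1
  have hq_mem : q ∈ u n := (htrace n).2.1 hq
  rw [hn] at hq_mem
  exact hq_mem.2 (Set.mem_biUnion hmn ⟨q.2, heq ▸ hq⟩)

theorem mkOuts_not_mem_getORefs (htrace : ValidLedgerTrace inputs outputs hsh u t)
    (hinj : Function.Injective hsh) (hwf : WellFoundedUTxO inputs hsh (u 0)) (n : ℕ) :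
    ∀ p ∈ mkOuts outputs hsh (t n), ∀ j ≤ n, p.1 ∉ getORefs inputs (t j) := by
  induction n using Nat.strong_induction_on with
  | _ n ih =>
  have hcumulative : ∀ j ≤ n, u j = cumulativeState inputs outputs hsh (u 0) t j :=
    fun j hj => htrace.eq_cumulativeState_of_fresh j fun k hk => ih k (by omega)
  rintro _ ⟨i, o, -, rfl⟩ j hj ⟨o', hspent⟩
  have hmem := (htrace j).2.1 hspent
  rw [hcumulative j hj] at hmem
  rcases hmem.1 with hinit | hcreated
  · exact hwf.fst_fst_ne hinj (htrace n).1 hinit rfl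
  · simp only [Set.mem_iUnion₂, mkOuts, Set.mem_ofPred_eq] at hcreated
    obtain ⟨m, hm, _, _, -, hkey⟩ := hcreated
    exact htrace.ne_of_lt (hcumulative n le_rfl) (by omega) (hinj (congrArg (·.1.1) hkey)).symm

end ValidLedgerTrace

/-- Final-state formula for a valid finite trace: the state after applying
`t 0, …, t n` equals the initial state together with all created outputs, minus all
entries whose keys were spent by some transaction in the sequence. -/
theorem final_state_formula {B O Tx : Type*}
    (inputs : Tx → Set ((B × ℕ) × O)) (outputs : Tx → List O) (hsh : Tx → B)
    (hinj : Function.Injective hsh)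
    (u : ℕ → Set ((B × ℕ) × O)) (t : ℕ → Tx)
    (htrace : ValidLedgerTrace inputs outputs hsh u t)
    (hwf : WellFoundedUTxO inputs hsh (u 0)) (n : ℕ) :
    u (n + 1) =
      {p | (p ∈ u 0 ∪ ⋃ i ≤ n, mkOuts outputs hsh (t i)) ∧
           p.1 ∉ ⋃ i ≤ n, getORefs inputs (t i)} := by
  have h := htrace.eq_cumulativeState_of_fresh (n + 1) fun k _ =>
    htrace.mkOuts_not_mem_getORefs hinj hwf k
  simpa only [cumulativeState, Nat.lt_succ_iff] using h
end
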